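/- Every simple line arrangement L of n ≥ 3 lines has at least three vertices of degree 2 in its arrangement graph G_L. -/

import Mathlib

/-!
The vertices of a simple arrangement of at least three lines are finitely many and not
collinear (three lines cut out a triangle), so by Krein–Milman the convex hull of the vertex set
has at least three extreme points, all of them vertices. An extreme vertex `v` is never strictly
between two vertices, so on each of the two lines through `v` all other vertices lie on one side
of `v`, and the nearest of them is the only neighbour of `v` on that line. Hence `v` has
degree `2`.
-/

/-- A line in the Euclidean plane `ℝ × ℝ`, given by an affine equation. -/
def IsLine (l : Set (ℝ × ℝ)) : Prop :=
  ∃ a b c : ℝ, (a, b) ≠ (0, 0) ∧ l = {p : ℝ × ℝ | a * p.1 + b * p.2 = c}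

/-- A simple line arrangement of `n` lines in the Euclidean plane: `n` distinct lines,
every two of which meet in exactly one point, and no point lies on three of the lines. -/
structure SimpleLineArrangement (n : ℕ) where
  lines : Finset (Set (ℝ × ℝ))
  card_lines : lines.card = n
  isLine : ∀ l ∈ lines, IsLine l
  meet : ∀ l₁ ∈ lines, ∀ l₂ ∈ lines, l₁ ≠ l₂ → ∃! p : ℝ × ℝ, p ∈ l₁ ∩ l₂
  simple : ∀ p : ℝ × ℝ, ∀ l₁ ∈ lines, ∀ l₂ ∈ lines, ∀ l₃ ∈ lines,
    p ∈ l₁ → p ∈ l₂ → p ∈ l₃ → l₁ = l₂ ∨ l₁ = l₃ ∨ l₂ = l₃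

namespace SimpleLineArrangement

variable {n : ℕ}

/-- The vertex set of the arrangement: all intersection points of pairs of lines. -/
def verts (A : SimpleLineArrangement n) : Set (ℝ × ℝ) :=
  {p | ∃ l₁ ∈ A.lines, ∃ l₂ ∈ A.lines, l₁ ≠ l₂ ∧ p ∈ l₁ ∧ p ∈ l₂}

/-- The arrangement graph: two distinct vertices are adjacent iff some line of the
arrangement contains both and no other vertex lies strictly between them on that line. -/
def graph (A : SimpleLineArrangement n) : SimpleGraph (ℝ × ℝ) where
  Adj u v := u ≠ v ∧ u ∈ A.verts ∧ v ∈ A.verts ∧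
    ∃ l ∈ A.lines, u ∈ l ∧ v ∈ l ∧ ∀ w ∈ A.verts, w ∈ l → ¬ Sbtw ℝ u w v
  symm := by
    constructor
    rintro u v ⟨huv, hu, hv, l, hl, hul, hvl, hbet⟩
    exact ⟨huv.symm, hv, hu, l, hl, hvl, hul, fun w hw hwl hb => hbet w hw hwl hb.symm⟩
  loopless := by constructor; rintro u ⟨h, -⟩; exact h rfl

/-- The degree of a vertex in the arrangement graph. -/
noncomputable def deg (A : SimpleLineArrangement n) (v : ℝ × ℝ) : ℕ :=
  {w | A.graph.Adj v w}.ncard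

/-- The number of vertices of the arrangement graph having degree `i`. -/
noncomputable def degCount (A : SimpleLineArrangement n) (i : ℕ) : ℕ :=
  {v | v ∈ A.verts ∧ A.deg v = i}.ncard

/-- The eccentricity of a vertex: the maximum graph distance to a vertex. -/
noncomputable def ecc (A : SimpleLineArrangement n) (u : ℝ × ℝ) : ℕ :=
  sSup ((fun v => A.graph.dist u v) '' A.verts)

/-- The realization `R(L)`: the union of the closed segments joining adjacent vertices. -/
def realization (A : SimpleLineArrangement n) : Set (ℝ × ℝ) :=
  ⋃ (u : ℝ × ℝ) (v : ℝ × ℝ) (_ : A.graph.Adj u v), segment ℝ u v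

/-- A point lies on the outer face of the realization if it belongs to the closure of
the unbounded connected component of the complement of the realization. -/
def OnOuterFace (A : SimpleLineArrangement n) (p : ℝ × ℝ) : Prop :=
  ∃ q : ℝ × ℝ, q ∉ A.realization ∧
    ¬ Bornology.IsBounded (connectedComponentIn (A.realization)ᶜ q) ∧
    p ∈ closure (connectedComponentIn (A.realization)ᶜ q)

end SimpleLineArrangement

open Set

section Collinear

variable {k V P : Type*} [DivisionRing k] [AddCommGroup V] [Module k V] [AddTorsor V P]

theorem Set.collinear_of_ncard_le_two {s : Set P} (hs : s.Finite) (h : s.ncard ≤ 2) :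
    Collinear k s := by
  interval_cases hc : s.ncard
  · rw [(ncard_eq_zero hs).1 hc]; exact collinear_empty k P
  · obtain ⟨a, rfl⟩ := ncard_eq_one.1 hc; exact collinear_singleton k a
  · obtain ⟨a, b, -, rfl⟩ := ncard_eq_two.1 hc; exact collinear_pair k a b

theorem collinear_affineSpan_iff {s : Set P} :
    Collinear k (affineSpan k s : Set P) ↔ Collinear k s := by
  change Module.rank k (affineSpan k s).direction ≤ 1 ↔ _
  rw [direction_affineSpan]
  rfl

end Collinear

section Betweenness

variable {k V P : Type*} [Field k] [LinearOrder k] [IsStrictOrderedRing k]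
  [AddCommGroup V] [Module k V] [AddTorsor V P]

theorem Collinear.eq_of_forall_not_sbtw {s : Set P} (hs : Collinear k s) {v w w' : P}
    (hv : v ∈ s) (hw : w ∈ s) (hw' : w' ∈ s) (hwv : w ≠ v) (hw'v : w' ≠ v)
    (hext : ¬ Sbtw k w v w') (hnw : ∀ u ∈ s, ¬ Sbtw k v u w)
    (hnw' : ∀ u ∈ s, ¬ Sbtw k v u w') : w = w' := by
  by_contra hne
  have hcol : Collinear k {v, w, w'} := hs.subset (by simp [insert_subset_iff, *])
  rcases hcol.wbtw_or_wbtw_or_wbtw with h | h | h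
  · exact hnw' w hw ⟨h, hwv, hne⟩
  · exact hnw w' hw' ⟨h.symm, hw'v, Ne.symm hne⟩
  · exact hext ⟨h.symm, hwv.symm, hw'v.symm⟩

end Betweenness

theorem Set.Finite.exists_forall_not_sbtw {V P : Type*} [NormedAddCommGroup V]
    [NormedSpace ℝ V] [MetricSpace P] [NormedAddTorsor V P] {s : Set P} (hs : s.Finite)
    {v : P} (h : (s \ {v}).Nonempty) : ∃ w ∈ s, w ≠ v ∧ ∀ u ∈ s, ¬ Sbtw ℝ v u w := by
  obtain ⟨w, ⟨hws, hwv⟩, hmin⟩ := exists_min_image _ (dist v) hs.sdiff h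
  refine ⟨w, hws, hwv, fun u hu huw => ?_⟩
  have hsplit := huw.wbtw.dist_add_dist
  have hle := hmin u ⟨hu, huw.ne_left⟩
  have hpos := dist_pos.2 huw.ne_right
  linarith

theorem not_sbtw_of_mem_extremePoints_convexHull {E : Type*} [AddCommGroup E] [Module ℝ E]
    {s : Set E} {v x y : E} (hv : v ∈ (convexHull ℝ s).extremePoints ℝ) (hx : x ∈ s)
    (hy : y ∈ s) : ¬ Sbtw ℝ x v y := fun hxy =>
  hxy.ne_left ((mem_extremePoints.1 hv).2 x (subset_convexHull ℝ s hx) y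
    (subset_convexHull ℝ s hy) (openSegment_eq_image_lineMap ℝ x y ▸ hxy.mem_image_Ioo)).1.symm

theorem three_le_ncard_extremePoints_convexHull {E : Type*} [AddCommGroup E] [Module ℝ E]
    [TopologicalSpace E] [T2Space E] [IsTopologicalAddGroup E] [ContinuousSMul ℝ E]
    [LocallyConvexSpace ℝ E] {s : Set E} (hs : s.Finite) (hcol : ¬ Collinear ℝ s) :
    3 ≤ ((convexHull ℝ s).extremePoints ℝ).ncard := by
  set X := (convexHull ℝ s).extremePoints ℝ
  have hXfin : X.Finite := hs.subset extremePoints_convexHull_subset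
  have hhull : convexHull ℝ X = convexHull ℝ s := by
    rw [← (hXfin.isClosed_convexHull ℝ).closure_eq]
    exact closure_convexHull_extremePoints (hs.isCompact_convexHull ℝ) (convex_convexHull ℝ s)
  have hsX : s ⊆ affineSpan ℝ X :=
    calc s ⊆ convexHull ℝ s := subset_convexHull ℝ s
      _ = convexHull ℝ X := hhull.symm
      _ ⊆ affineSpan ℝ X := convexHull_subset_affineSpan X
  by_contra! h
  exact hcol ((collinear_affineSpan_iff.2 (collinear_of_ncard_le_two hXfin (by omega))).subset hsX)

namespace IsLine

variable {l : Set (ℝ × ℝ)}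

theorem collinear (hl : IsLine l) : Collinear ℝ l := by
  obtain ⟨a, b, c, hab, rfl⟩ := hl
  have hN : a ^ 2 + b ^ 2 ≠ 0 := fun h => hab <| by
    simp only [Prod.mk.injEq]
    constructor <;> nlinarith [sq_nonneg a, sq_nonneg b]
  -- the foot of the perpendicular from the origin, and the direction `(-b, a)`
  refine (collinear_iff_exists_forall_eq_smul_vadd _).2
    ⟨(a * c / (a ^ 2 + b ^ 2), b * c / (a ^ 2 + b ^ 2)), (-b, a), fun p hp =>
      ⟨(a * p.2 - b * p.1) / (a ^ 2 + b ^ 2), ?_⟩⟩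
  have hp : a * p.1 + b * p.2 = c := hp
  refine Prod.ext ?_ ?_ <;>
    simp only [Prod.smul_mk, smul_eq_mul, mul_neg, vadd_eq_add, Prod.mk_add_mk] <;> field_simp
  · linear_combination a * hp
  · linear_combination b * hp

theorem mem_of_mem_affineSpan_pair (hl : IsLine l) {p q r : ℝ × ℝ} (hp : p ∈ l) (hq : q ∈ l)
    (hr : r ∈ line[ℝ, p, q]) : r ∈ l := by
  obtain ⟨a, b, c, -, rfl⟩ := hl
  obtain ⟨t, rfl⟩ := mem_affineSpan_pair_iff_exists_lineMap_eq.1 hr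
  have hp : a * p.1 + b * p.2 = c := hp
  have hq : a * q.1 + b * q.2 = c := hq
  show a * _ + b * _ = c
  simp only [AffineMap.lineMap_apply_module, Prod.fst_add, Prod.smul_fst, smul_eq_mul,
    Prod.snd_add, Prod.smul_snd]
  linear_combination (1 - t) * hp + t * hq

end IsLine

namespace SimpleLineArrangement

variable {n : ℕ} (A : SimpleLineArrangement n)

theorem eq_of_mem_inter {l₁ l₂ : Set (ℝ × ℝ)} (h₁ : l₁ ∈ A.lines) (h₂ : l₂ ∈ A.lines)
    (hne : l₁ ≠ l₂) {p q : ℝ × ℝ} (hp : p ∈ l₁ ∩ l₂) (hq : q ∈ l₁ ∩ l₂) : p = q :=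
  (A.meet l₁ h₁ l₂ h₂ hne).unique hp hq

theorem notMem_of_mem_of_mem {l₁ l₂ l₃ : Set (ℝ × ℝ)} (h₁ : l₁ ∈ A.lines) (h₂ : l₂ ∈ A.lines)
    (h₃ : l₃ ∈ A.lines) (h₁₂ : l₁ ≠ l₂) (h₁₃ : l₁ ≠ l₃) (h₂₃ : l₂ ≠ l₃) {p : ℝ × ℝ}
    (hp₁ : p ∈ l₁) (hp₂ : p ∈ l₂) : p ∉ l₃ := fun hp₃ => by
  rcases A.simple p l₁ h₁ l₂ h₂ l₃ h₃ hp₁ hp₂ hp₃ with h | h | h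
  exacts [h₁₂ h, h₁₃ h, h₂₃ h]

theorem verts_finite : A.verts.Finite := by
  have hsub : A.verts ⊆ ⋃ l₁ ∈ (A.lines : Set (Set (ℝ × ℝ))),
      ⋃ l₂ ∈ (A.lines.erase l₁ : Set (Set (ℝ × ℝ))), l₁ ∩ l₂ := by
    rintro p ⟨l₁, h₁, l₂, h₂, hne, hp₁, hp₂⟩
    simp only [mem_iUnion, Finset.mem_coe]
    exact ⟨l₁, h₁, l₂, Finset.mem_erase.2 ⟨hne.symm, h₂⟩, hp₁, hp₂⟩
  refine (A.lines.finite_toSet.biUnion fun l₁ h₁ => (A.lines.erase l₁).finite_toSet.biUnion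
    fun l₂ h₂ => ?_).subset hsub
  obtain ⟨hne, h₂⟩ := Finset.mem_erase.1 h₂
  exact Set.Subsingleton.finite fun _ hp _ hq => A.eq_of_mem_inter h₁ h₂ hne.symm hp hq

theorem exists_mem_lines_ne_ne (hn : 3 ≤ n) (l₁ l₂ : Set (ℝ × ℝ)) :
    ∃ l ∈ A.lines, l ≠ l₁ ∧ l ≠ l₂ := by
  by_contra! h
  rw [← A.card_lines] at hn
  have hsub : A.lines ⊆ {l₁, l₂} := fun l hl => by
    rcases eq_or_ne l l₁ with rfl | hl₁
    exacts [Finset.mem_insert_self _ _, by simp [h l hl hl₁]]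
  have := (Finset.card_le_card hsub).trans Finset.card_le_two
  omega

theorem exists_lines_of_mem_verts {v : ℝ × ℝ} (hv : v ∈ A.verts) :
    ∃ l₁ ∈ A.lines, ∃ l₂ ∈ A.lines, l₁ ≠ l₂ ∧ v ∈ l₁ ∧ v ∈ l₂ ∧
      ∀ l ∈ A.lines, v ∈ l → l = l₁ ∨ l = l₂ := by
  obtain ⟨l₁, h₁, l₂, h₂, hne, hv₁, hv₂⟩ := hv
  refine ⟨l₁, h₁, l₂, h₂, hne, hv₁, hv₂, fun l hl hvl => ?_⟩
  rcases A.simple v l hl l₁ h₁ l₂ h₂ hvl hv₁ hv₂ with h | h | h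
  exacts [.inl h, .inr h, absurd h hne]

theorem nonempty_verts_inter_diff_singleton (hn : 3 ≤ n) {v : ℝ × ℝ} (hv : v ∈ A.verts)
    {l : Set (ℝ × ℝ)} (hl : l ∈ A.lines) (hvl : v ∈ l) : ((A.verts ∩ l) \ {v}).Nonempty := by
  obtain ⟨l', hl', hl'l, hvl'⟩ : ∃ l' ∈ A.lines, l' ≠ l ∧ v ∈ l' := by
    obtain ⟨l₁, h₁, l₂, h₂, hne, hv₁, hv₂⟩ := hv
    rcases eq_or_ne l₁ l with rfl | h
    exacts [⟨l₂, h₂, hne.symm, hv₂⟩, ⟨l₁, h₁, h, hv₁⟩]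
  obtain ⟨l₃, h₃, h₃l, h₃l'⟩ := A.exists_mem_lines_ne_ne hn l l'
  obtain ⟨p, ⟨hpl, hp₃⟩, -⟩ := A.meet l hl l₃ h₃ h₃l.symm
  refine ⟨p, ⟨⟨l, hl, l₃, h₃, h₃l.symm, hpl, hp₃⟩, hpl⟩, ?_⟩
  rintro rfl
  exact A.notMem_of_mem_of_mem hl hl' h₃ hl'l.symm h₃l.symm h₃l'.symm hpl hvl' hp₃

theorem not_collinear_verts (hn : 3 ≤ n) : ¬ Collinear ℝ A.verts := by
  intro hcol
  obtain ⟨l₁, h₁⟩ := A.lines.card_pos.1 (by rw [A.card_lines]; omega)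
  obtain ⟨l₂, h₂, h₂₁, -⟩ := A.exists_mem_lines_ne_ne hn l₁ l₁
  obtain ⟨l₃, h₃, h₃₁, h₃₂⟩ := A.exists_mem_lines_ne_ne hn l₁ l₂
  obtain ⟨p, ⟨hp₁, hp₂⟩, -⟩ := A.meet l₁ h₁ l₂ h₂ h₂₁.symm
  obtain ⟨q, ⟨hq₁, hq₃⟩, -⟩ := A.meet l₁ h₁ l₃ h₃ h₃₁.symm
  obtain ⟨r, ⟨hr₂, hr₃⟩, -⟩ := A.meet l₂ h₂ l₃ h₃ h₃₂.symm
  have hpq : p ≠ q := by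
    rintro rfl
    exact A.notMem_of_mem_of_mem h₁ h₂ h₃ h₂₁.symm h₃₁.symm h₃₂.symm hp₁ hp₂ hq₃
  have hr₁ : r ∈ l₁ := (A.isLine l₁ h₁).mem_of_mem_affineSpan_pair hp₁ hq₁ <|
    hcol.mem_affineSpan_of_mem_of_ne ⟨l₁, h₁, l₂, h₂, h₂₁.symm, hp₁, hp₂⟩
      ⟨l₁, h₁, l₃, h₃, h₃₁.symm, hq₁, hq₃⟩ ⟨l₂, h₂, l₃, h₃, h₃₂.symm, hr₂, hr₃⟩ hpq
  exact A.notMem_of_mem_of_mem h₁ h₂ h₃ h₂₁.symm h₃₁.symm h₃₂.symm hr₁ hr₂ hr₃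

theorem graph_adj_iff_of_mem {l : Set (ℝ × ℝ)} (hl : l ∈ A.lines) {v w : ℝ × ℝ} (hv : v ∈ l)
    (hw : w ∈ l) :
    A.graph.Adj v w ↔ v ≠ w ∧ v ∈ A.verts ∧ w ∈ A.verts ∧ ∀ u ∈ A.verts ∩ l, ¬ Sbtw ℝ v u w := by
  constructor
  · rintro ⟨hvw, hvV, hwV, l', hl', hvl', hwl', hbtw⟩
    obtain rfl : l' = l := by
      by_contra hne
      exact hvw (A.eq_of_mem_inter hl' hl hne ⟨hvl', hv⟩ ⟨hwl', hw⟩)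
    exact ⟨hvw, hvV, hwV, fun u hu => hbtw u hu.1 hu.2⟩
  · rintro ⟨hvw, hvV, hwV, hbtw⟩
    exact ⟨hvw, hvV, hwV, l, hl, hv, hw, fun u hu hul => hbtw u ⟨hu, hul⟩⟩

theorem existsUnique_adj_of_mem (hn : 3 ≤ n) {v : ℝ × ℝ} (hv : v ∈ A.verts)
    (hext : ∀ x ∈ A.verts, ∀ y ∈ A.verts, ¬ Sbtw ℝ x v y) {l : Set (ℝ × ℝ)} (hl : l ∈ A.lines)
    (hvl : v ∈ l) : ∃! w, w ∈ l ∧ A.graph.Adj v w := by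
  have hcol : Collinear ℝ (A.verts ∩ l) := (A.isLine l hl).collinear.subset inter_subset_right
  obtain ⟨w, ⟨hwV, hwl⟩, hwv, hw⟩ := (A.verts_finite.inter_of_left l).exists_forall_not_sbtw
    (A.nonempty_verts_inter_diff_singleton hn hv hl hvl)
  refine ⟨w, ⟨hwl, (A.graph_adj_iff_of_mem hl hvl hwl).2 ⟨hwv.symm, hv, hwV, hw⟩⟩, ?_⟩
  rintro w' ⟨hw'l, hadj⟩
  obtain ⟨hvw', -, hw'V, hw'⟩ := (A.graph_adj_iff_of_mem hl hvl hw'l).1 hadj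
  exact hcol.eq_of_forall_not_sbtw ⟨hv, hvl⟩ ⟨hw'V, hw'l⟩ ⟨hwV, hwl⟩ hvw'.symm hwv
    (hext w' hw'V w hwV) hw' hw

theorem deg_eq_two_of_forall_not_sbtw (hn : 3 ≤ n) {v : ℝ × ℝ} (hv : v ∈ A.verts)
    (hext : ∀ x ∈ A.verts, ∀ y ∈ A.verts, ¬ Sbtw ℝ x v y) : A.deg v = 2 := by
  obtain ⟨l₁, h₁, l₂, h₂, hne, hv₁, hv₂, honly⟩ := A.exists_lines_of_mem_verts hv
  obtain ⟨w₁, ⟨hw₁, hadj₁⟩, huniq₁⟩ := A.existsUnique_adj_of_mem hn hv hext h₁ hv₁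
  obtain ⟨w₂, ⟨hw₂, hadj₂⟩, huniq₂⟩ := A.existsUnique_adj_of_mem hn hv hext h₂ hv₂
  have hw₁₂ : w₁ ≠ w₂ := by
    rintro rfl
    exact hadj₁.ne (A.eq_of_mem_inter h₁ h₂ hne ⟨hv₁, hv₂⟩ ⟨hw₁, hw₂⟩)
  have hnbrs : {w | A.graph.Adj v w} = {w₁, w₂} := by
    ext w
    refine ⟨fun hadj => ?_, ?_⟩
    · obtain ⟨l, hl, hvl, hwl, -⟩ := hadj.2.2.2
      rcases honly l hl hvl with rfl | rfl
      exacts [.inl (huniq₁ w ⟨hwl, hadj⟩), .inr (huniq₂ w ⟨hwl, hadj⟩)]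
    · rintro (rfl | rfl)
      exacts [hadj₁, hadj₂]
  rw [deg, hnbrs, ncard_pair hw₁₂]

end SimpleLineArrangement

theorem arrangement_at_least_three_degree_two (n : ℕ) (hn : 3 ≤ n)
    (A : SimpleLineArrangement n) : 3 ≤ A.degCount 2 := by
  set X := (convexHull ℝ A.verts).extremePoints ℝ
  have hX : X ⊆ {v | v ∈ A.verts ∧ A.deg v = 2} := fun v hv =>
    ⟨extremePoints_convexHull_subset hv, A.deg_eq_two_of_forall_not_sbtw hn
      (extremePoints_convexHull_subset hv) fun _ hx _ hy =>
        not_sbtw_of_mem_extremePoints_convexHull hv hx hy⟩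
  calc 3 ≤ X.ncard := three_le_ncard_extremePoints_convexHull A.verts_finite
        (A.not_collinear_verts hn)
    _ ≤ A.degCount 2 := ncard_le_ncard hX (A.verts_finite.subset fun _ hv => hv.1)
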